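/- For all τ ∈ ℍ and all z = (z₁,…,z₁₂) ∈ ℂ^{12} one has the doubling identity φ11(2τ, 2z) = φ10(τ,z)·φ11(τ,z), where 2z := (2z₁,…,2z₁₂) and 2τ ∈ ℍ. -/

import Mathlib

open Complex

/-- `ee w = exp(2πiw)`; thus `q^r = ee (r·τ)` and `ζ^r = ee (r·u)`. -/
noncomputable def ee (w : ℂ) : ℂ := Complex.exp (2 * Real.pi * Complex.I * w)

/-- The Dedekind eta function `η(τ) = q^{1/24} ∏_{n≥1} (1 − qⁿ)`. -/
noncomputable def dedekindEta (τ : UpperHalfPlane) : ℂ :=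
  ee ((τ : ℂ) / 24) * ∏' n : ℕ, (1 - ee (((n : ℂ) + 1) * (τ : ℂ)))

/-- `ϑ11(τ,u) = −q^{1/8} ζ^{−1/2} ∏_{n≥1} (1−q^{n−1}ζ)(1−qⁿζ^{−1})(1−qⁿ)`. -/
noncomputable def th11 (τ : UpperHalfPlane) (u : ℂ) : ℂ :=
  -(ee ((τ : ℂ) / 8) * ee (-u / 2)) *
    ∏' n : ℕ, ((1 - ee ((n : ℂ) * (τ : ℂ)) * ee u) *
      (1 - ee (((n : ℂ) + 1) * (τ : ℂ)) * ee (-u)) * (1 - ee (((n : ℂ) + 1) * (τ : ℂ))))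

/-- `ϑ10(τ,u) = q^{1/8}(ζ^{1/2}+ζ^{−1/2}) ∏_{n≥1} (1−qⁿ)(1+qⁿζ)(1+qⁿζ^{−1})`. -/
noncomputable def th10 (τ : UpperHalfPlane) (u : ℂ) : ℂ :=
  ee ((τ : ℂ) / 8) * (ee (u / 2) + ee (-u / 2)) *
    ∏' n : ℕ, ((1 - ee (((n : ℂ) + 1) * (τ : ℂ))) *
      (1 + ee (((n : ℂ) + 1) * (τ : ℂ)) * ee u) * (1 + ee (((n : ℂ) + 1) * (τ : ℂ)) * ee (-u)))

/-- `φ10(τ,z) = η(τ)^{−12} ∏_{j=1}^{12} ϑ10(τ,z_j)`. -/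
noncomputable def phi10 (τ : UpperHalfPlane) (z : Fin 12 → ℂ) : ℂ :=
  (dedekindEta τ ^ 12)⁻¹ * ∏ j, th10 τ (z j)

/-- `φ11(τ,z) = η(τ)^{−12} ∏_{j=1}^{12} ϑ11(τ,z_j)`. -/
noncomputable def phi11 (τ : UpperHalfPlane) (z : Fin 12 → ℂ) : ℂ :=
  (dedekindEta τ ^ 12)⁻¹ * ∏ j, th11 τ (z j)

/-- `2τ` as a point of the upper half-plane. -/
noncomputable def dblH (τ : UpperHalfPlane) : UpperHalfPlane :=
  ⟨2 * (τ : ℂ), by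
    have h := τ.im_pos
    rw [Complex.mul_im]
    simp [UpperHalfPlane.coe_im]
    linarith⟩


/-!
Writing `q = e(τ)`, `ζ = e(u)` and `(a; q)_∞ = ∏_{n ≥ 0} (1 - a qⁿ)`, every factor is a product
of `q`-Pochhammer symbols, and `(a; q)_∞ (-a; q)_∞ = (a²; q²)_∞` turns
`ϑ10(τ,u) ϑ11(τ,u)` into `ϑ11(2τ,2u) · η(τ)² / η(2τ)`. Taking the product over the twelve
coordinates, the twelve factors `η(2τ)` and twenty-four factors `η(τ)` are exactly absorbed by
the normalisations of `φ10`, `φ11`, since `η` does not vanish on `ℍ`.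
-/

lemma ee_add (x y : ℂ) : ee (x + y) = ee x * ee y := by
  rw [ee, ee, ee, mul_add, Complex.exp_add]

lemma ee_natCast_mul (n : ℕ) (w : ℂ) : ee (n * w) = ee w ^ n := by
  rw [ee, ee, ← Complex.exp_nat_mul]
  ring_nf

lemma ee_natCast_add_one_mul (n : ℕ) (w : ℂ) : ee ((n + 1) * w) = ee w ^ (n + 1) :=
  mod_cast ee_natCast_mul (n + 1) w

lemma ee_two_mul (w : ℂ) : ee (2 * w) = ee w ^ 2 := mod_cast ee_natCast_mul 2 w

lemma norm_ee_lt_one (τ : UpperHalfPlane) : ‖ee τ‖ < 1 :=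
  UpperHalfPlane.norm_exp_two_pi_I_lt_one τ

lemma dedekindEta_eq_eta (τ : UpperHalfPlane) : dedekindEta τ = ModularForm.eta τ := by
  simp only [dedekindEta, ModularForm.eta, ModularForm.eta_q, Function.Periodic.qParam, ee,
    ← Complex.exp_nat_mul, Nat.cast_add, Nat.cast_one, mul_div_assoc]
  congr 3 with n
  push_cast
  ring_nf

lemma dedekindEta_ne_zero (τ : UpperHalfPlane) : dedekindEta τ ≠ 0 := by
  rw [dedekindEta_eq_eta]
  exact ModularForm.eta_ne_zero τ.coe_im_pos

noncomputable def qPochhammer (a q : ℂ) : ℂ := ∏' n : ℕ, (1 - a * q ^ n)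

section qPochhammer

variable {q : ℂ} (hq : ‖q‖ < 1)
include hq

lemma multipliable_one_sub_mul_pow (a : ℂ) : Multipliable fun n : ℕ => 1 - a * q ^ n := by
  simp_rw [sub_eq_add_neg]
  refine multipliable_one_add_of_summable ?_
  simpa [norm_mul, norm_pow] using
    (summable_geometric_of_lt_one (norm_nonneg q) hq).mul_left ‖a‖

lemma qPochhammer_eq_one_sub_mul (a : ℂ) : qPochhammer a q = (1 - a) * qPochhammer (a * q) q := by
  rw [qPochhammer, tprod_eq_zero_mul']
  · simp only [pow_zero, mul_one, pow_succ, mul_assoc, qPochhammer]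
    congr 2 with n
    ring
  · convert multipliable_one_sub_mul_pow hq (a * q) using 2 with n
    ring

lemma qPochhammer_mul_qPochhammer_neg (a : ℂ) :
    qPochhammer a q * qPochhammer (-a) q = qPochhammer (a ^ 2) (q ^ 2) := by
  rw [qPochhammer, qPochhammer, ← (multipliable_one_sub_mul_pow hq a).tprod_mul
    (multipliable_one_sub_mul_pow hq (-a)), qPochhammer]
  congr 1 with n
  ring

lemma tprod_one_sub_mul_pow_mul₃ (a b c : ℂ) :
    ∏' n : ℕ, ((1 - a * q ^ n) * (1 - b * q ^ n) * (1 - c * q ^ n)) =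
      qPochhammer a q * qPochhammer b q * qPochhammer c q := by
  have hm := multipliable_one_sub_mul_pow hq
  rw [((hm a).mul (hm b)).tprod_mul (hm c), (hm a).tprod_mul (hm b), qPochhammer, qPochhammer,
    qPochhammer]

end qPochhammer

lemma dedekindEta_eq_qPochhammer (τ : UpperHalfPlane) :
    dedekindEta τ = ee (τ / 24) * qPochhammer (ee τ) (ee τ) := by
  unfold dedekindEta qPochhammer
  congr 1
  exact tprod_congr fun n => by rw [ee_natCast_add_one_mul, pow_succ']

lemma th11_eq_qPochhammer (τ : UpperHalfPlane) (u : ℂ) :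
    th11 τ u = -(ee (τ / 8) * ee (-u / 2)) *
      (qPochhammer (ee u) (ee τ) * qPochhammer (ee (-u) * ee τ) (ee τ) *
        qPochhammer (ee τ) (ee τ)) := by
  rw [th11, ← tprod_one_sub_mul_pow_mul₃ (norm_ee_lt_one τ)]
  congr 2 with n
  rw [ee_natCast_add_one_mul, ee_natCast_mul]
  ring

lemma th10_eq_qPochhammer (τ : UpperHalfPlane) (u : ℂ) :
    th10 τ u = ee (τ / 8) * (ee (u / 2) + ee (-u / 2)) *
      (qPochhammer (ee τ) (ee τ) * qPochhammer (-(ee u * ee τ)) (ee τ) *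
        qPochhammer (-(ee (-u) * ee τ)) (ee τ)) := by
  rw [th10, ← tprod_one_sub_mul_pow_mul₃ (norm_ee_lt_one τ)]
  congr 2 with n
  rw [ee_natCast_add_one_mul]
  ring

lemma coe_dblH (τ : UpperHalfPlane) : (dblH τ : ℂ) = 2 * τ := rfl

lemma ee_neg_mul_one_add_ee (u : ℂ) :
    ee (-u) * (1 + ee u) = (ee (u / 2) + ee (-u / 2)) * ee (-u / 2) := by
  rw [mul_add, add_mul, mul_one, ← ee_add, ← ee_add, ← ee_add, neg_add_cancel,
    show u / 2 + -u / 2 = 0 by ring, show -u / 2 + -u / 2 = -u by ring]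
  ring

lemma dedekindEta_sq_mul_th11_dblH (τ : UpperHalfPlane) (u : ℂ) :
    dedekindEta τ ^ 2 * th11 (dblH τ) (2 * u) = dedekindEta (dblH τ) * (th10 τ u * th11 τ u) := by
  have hq := norm_ee_lt_one τ
  set q := ee τ
  have hζ : qPochhammer (ee (2 * u)) (ee (2 * τ)) =
      (1 + ee u) * qPochhammer (ee u) q * qPochhammer (-(ee u * q)) q := by
    rw [ee_two_mul, ee_two_mul, ← qPochhammer_mul_qPochhammer_neg hq,
      qPochhammer_eq_one_sub_mul hq (-ee u), neg_mul]
    ring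
  have hζ' : qPochhammer (ee (-(2 * u)) * ee (2 * τ)) (ee (2 * τ)) =
      qPochhammer (ee (-u) * q) q * qPochhammer (-(ee (-u) * q)) q := by
    rw [show -(2 * u) = 2 * -u by ring, ee_two_mul, ee_two_mul, ← mul_pow,
      qPochhammer_mul_qPochhammer_neg hq]
  rw [th11_eq_qPochhammer, coe_dblH, hζ, hζ', show -(2 * u) / 2 = -u by ring,
    dedekindEta_eq_qPochhammer, dedekindEta_eq_qPochhammer, coe_dblH, th10_eq_qPochhammer,
    th11_eq_qPochhammer]
  simp only [mul_div_assoc, ee_two_mul]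
  -- all infinite products now agree; only the prefactors `ζ⁻¹ (1 + ζ) = (ζ^½ + ζ^-½) ζ^-½` differ
  linear_combination -(ee (τ / 24) ^ 2 * ee (τ / 8) ^ 2 * qPochhammer q q ^ 2 *
    qPochhammer (q ^ 2) (q ^ 2) * qPochhammer (ee u) q * qPochhammer (-(ee u * q)) q *
    qPochhammer (ee (-u) * q) q * qPochhammer (-(ee (-u) * q)) q) * ee_neg_mul_one_add_ee u

/-- The doubling identity `φ11(2τ, 2z) = φ10(τ,z) · φ11(τ,z)`. -/
theorem phi11_doubling (τ : UpperHalfPlane) (z : Fin 12 → ℂ) :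
    phi11 (dblH τ) (fun j => 2 * z j) = phi10 τ z * phi11 τ z := by
  have hη := dedekindEta_ne_zero τ
  have hdouble (u : ℂ) : th11 (dblH τ) (2 * u) =
      dedekindEta (dblH τ) / dedekindEta τ ^ 2 * (th10 τ u * th11 τ u) := by
    rw [div_mul_eq_mul_div, eq_div_iff (pow_ne_zero 2 hη), mul_comm, dedekindEta_sq_mul_th11_dblH]
  simp only [phi11, phi10, hdouble, Finset.prod_mul_distrib, Finset.prod_const, Finset.card_univ,
    Fintype.card_fin]
  field_simp [dedekindEta_ne_zero (dblH τ)]
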